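/- Let σ be a real number with σ ∉ {-1/2, 1/4, 1}, let C > 0, and let m, k, M, σ determine the potential V(x) = (m²C³/α)(αCx²)^{(1-4σ)/(αA)} + (M²C/α)(αCx²)^{2(4σ²-5σ+1)/(3αA)} + (k²C/α)(αCx²)^{4σ(σ-1)/(αA)} - 1/(4x²), where A = 4σ² - 2σ + 1 and α = (2σ+1)²/(3A). Then x²·V(x) tends to -1/4 as x → 0 from the right. Hence in the generic case the Schrödinger equation near zero takes the form Ψ'' + (1/(4x²))Ψ = 0. -/

import Mathlib

open Filter Set Real

/-- Auxiliary limit: for `b > 0` and `2 + 2p > 0`, `x² (b x²)^p → 0` as `x → 0⁺`. -/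
lemma aux_tendsto_zero (b p c : ℝ) (hb : 0 < b) (hp : 0 < 2 + 2 * p) :
    Tendsto (fun x : ℝ => x ^ 2 * (c * (b * x ^ 2) ^ p))
      (nhdsWithin 0 (Set.Ioi 0)) (nhds 0) := by
  have heq : ∀ x ∈ Set.Ioi (0 : ℝ),
      x ^ 2 * (c * (b * x ^ 2) ^ p) = c * b ^ p * x ^ (2 + 2 * p) := by
    intro x hx
    have hx0 : (0 : ℝ) < x := hx
    have hx2 : (0 : ℝ) ≤ x ^ 2 := sq_nonneg x
    rw [Real.mul_rpow hb.le hx2]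
    have h1 : (x ^ 2 : ℝ) ^ p = x ^ (2 * p) := by
      rw [← Real.rpow_natCast x 2, ← Real.rpow_mul hx0.le]
      norm_num
    rw [h1]
    have h2 : (x : ℝ) ^ (2 + 2 * p) = x ^ (2 : ℕ) * x ^ (2 * p) := by
      rw [Real.rpow_add hx0, ← Real.rpow_natCast x 2]
      norm_num
    rw [h2]; ring
  have hlim : Tendsto (fun x : ℝ => c * b ^ p * x ^ (2 + 2 * p))
      (nhdsWithin 0 (Set.Ioi 0)) (nhds 0) := by
    have hcont : Tendsto (fun x : ℝ => x ^ (2 + 2 * p))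
        (nhdsWithin 0 (Set.Ioi 0)) (nhds 0) := by
      have := (Real.continuousAt_rpow_const 0 (2 + 2 * p) (Or.inr hp.le)).tendsto
      rw [Real.zero_rpow hp.ne'] at this
      exact this.mono_left nhdsWithin_le_nhds
    have := hcont.const_mul (c * b ^ p)
    simpa using this
  exact hlim.congr' (by filter_upwards [self_mem_nhdsWithin] with x hx
    using (heq x hx).symm)

/-- In the generic case σ ∉ {-1/2, 1/4, 1}, with A = 4σ² - 2σ + 1 and
α = (2σ+1)²/(3A), the potential
V(x) = (m²C³/α)(αCx²)^{(1-4σ)/(αA)} + (M²C/α)(αCx²)^{2(4σ²-5σ+1)/(3αA)}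
     + (k²C/α)(αCx²)^{4σ(σ-1)/(αA)} - 1/(4x²)
satisfies x²·V(x) → -1/4 as x → 0⁺, so the near-axis Schrödinger equation takes the
form Ψ'' + (1/(4x²))Ψ = 0. -/
theorem generic_potential_near_zero (σ C m k M : ℝ) (hC : 0 < C)
    (hσ1 : σ ≠ -(1 / 2)) (hσ2 : σ ≠ 1 / 4) (hσ3 : σ ≠ 1)
    (A α : ℝ) (hA : A = 4 * σ ^ 2 - 2 * σ + 1) (hα : α = (2 * σ + 1) ^ 2 / (3 * A)) :
    Filter.Tendsto
      (fun x : ℝ => x ^ 2 *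
        (m ^ 2 * C ^ 3 / α * (α * C * x ^ 2) ^ ((1 - 4 * σ) / (α * A))
          + M ^ 2 * C / α * (α * C * x ^ 2) ^ (2 * (4 * σ ^ 2 - 5 * σ + 1) / (3 * α * A))
          + k ^ 2 * C / α * (α * C * x ^ 2) ^ (4 * σ * (σ - 1) / (α * A))
          - 1 / (4 * x ^ 2)))
      (nhdsWithin 0 (Set.Ioi 0)) (nhds (-(1 / 4))) := by
  have hApos : 0 < A := by nlinarith [sq_nonneg (2 * σ - 1 / 2)]
  have hsne : (2 * σ + 1) ≠ 0 := by
    intro h; apply hσ1; linarith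
  have hs : 0 < (2 * σ + 1) ^ 2 := by positivity
  have hαpos : 0 < α := by rw [hα]; positivity
  have hαA : α * A = (2 * σ + 1) ^ 2 / 3 := by
    rw [hα]; field_simp
  have hσ1' : (σ - 1) ≠ 0 := sub_ne_zero.mpr hσ3
  have hσ2' : (4 * σ - 1) ≠ 0 := by
    intro h; apply hσ2; linarith
  -- exponent positivity
  have h1 : 0 < 2 + 2 * ((1 - 4 * σ) / (α * A)) := by
    rw [hαA]
    have key : 2 + 2 * ((1 - 4 * σ) / ((2 * σ + 1) ^ 2 / 3))
        = 8 * (σ - 1) ^ 2 / (2 * σ + 1) ^ 2 := by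
      field_simp; ring
    rw [key]
    have : 0 < (σ - 1) ^ 2 := by positivity
    positivity
  have h2 : 0 < 2 + 2 * (2 * (4 * σ ^ 2 - 5 * σ + 1) / (3 * α * A)) := by
    have h3αA : 3 * α * A = (2 * σ + 1) ^ 2 := by
      rw [mul_assoc, hαA]; field_simp
    rw [h3αA]
    have key : 2 + 2 * (2 * (4 * σ ^ 2 - 5 * σ + 1) / (2 * σ + 1) ^ 2)
        = (6 * (4 * σ ^ 2 - 2 * σ + 1)) / (2 * σ + 1) ^ 2 := by
      field_simp; ring
    rw [key]
    have : 0 < 4 * σ ^ 2 - 2 * σ + 1 := by rw [← hA]; exact hApos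
    positivity
  have h3 : 0 < 2 + 2 * (4 * σ * (σ - 1) / (α * A)) := by
    rw [hαA]
    have key : 2 + 2 * (4 * σ * (σ - 1) / ((2 * σ + 1) ^ 2 / 3))
        = 2 * (4 * σ - 1) ^ 2 / (2 * σ + 1) ^ 2 := by
      field_simp; ring
    rw [key]
    have : 0 < (4 * σ - 1) ^ 2 := by positivity
    positivity
  have hαC : 0 < α * C := by positivity
  -- the three vanishing terms
  have t1 := aux_tendsto_zero (α * C) ((1 - 4 * σ) / (α * A)) (m ^ 2 * C ^ 3 / α) hαC h1
  have t2 := aux_tendsto_zero (α * C) (2 * (4 * σ ^ 2 - 5 * σ + 1) / (3 * α * A))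
    (M ^ 2 * C / α) hαC h2
  have t3 := aux_tendsto_zero (α * C) (4 * σ * (σ - 1) / (α * A)) (k ^ 2 * C / α) hαC h3
  -- the constant term
  have t4 : Tendsto (fun x : ℝ => x ^ 2 * (1 / (4 * x ^ 2)))
      (nhdsWithin 0 (Set.Ioi 0)) (nhds (1 / 4)) := by
    have : ∀ x ∈ Set.Ioi (0 : ℝ), x ^ 2 * (1 / (4 * x ^ 2)) = 1 / 4 := by
      intro x hx
      have hx0 : (0 : ℝ) < x := hx
      field_simp
    exact tendsto_const_nhds.congr' (by
      filter_upwards [self_mem_nhdsWithin] with x hx using (this x hx).symm)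
  have hsum := ((t1.add t2).add t3).sub t4
  have : ((0 : ℝ) + 0 + 0 - 1 / 4) = -(1 / 4) := by norm_num
  rw [this] at hsum
  refine hsum.congr (fun x => ?_)
  ring
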